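/- For every edge [x, y] ∈ E of Wedge(f_1,…,f_d) one has |u(x) − u(y)| ≤ 1. Consequently, for every n ≥ 1, the set ∂_n = {z ∈ V : u(z) = n} is a cutset: every path in Wedge(f_1,…,f_d) from the origin O to a vertex y with u(y) > n must contain a vertex z with u(z) = n. -/
import Mathlib


open scoped ENNReal BigOperators

namespace WedgePaper

/-- A point of `ℤ^{d+1}`, written as (x₁,…,x_d, x_{d+1}). -/
abbrev Pt (d : ℕ) := (Fin d → ℤ) × ℤ

/-- The vertex set `V` of `Wedge(f₁,…,f_d)`:
points `(x₁,…,x_d,n) ∈ ℤ^{d+1}` with `n ≥ 0` and `0 ≤ xᵢ ≤ fᵢ(n)`. -/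
def V (d : ℕ) (f : Fin d → ℕ → ℝ≥0∞) : Set (Pt d) :=
  {x | 0 ≤ x.2 ∧ ∀ i, 0 ≤ x.1 i ∧ ((x.1 i).toNat : ℝ≥0∞) ≤ f i x.2.toNat}

/-- The ℓ¹ distance on `ℤ^{d+1}`. -/
def dist1 (d : ℕ) (x y : Pt d) : ℤ :=
  (∑ i : Fin d, |x.1 i - y.1 i|) + |x.2 - y.2|

/-- The edge relation of `Wedge(f₁,…,f_d)`. -/
def Edge (d : ℕ) (f : Fin d → ℕ → ℝ≥0∞) (x y : Pt d) : Prop :=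
  x ∈ V d f ∧ y ∈ V d f ∧ dist1 d x y = 1

/-- `pfun d h x i = pᵢ(x) = min{m : hᵢ(m) ≥ xᵢ}`. -/
noncomputable def pfun (d : ℕ) (h : Fin d → ℕ → ℕ) (x : Pt d) (i : Fin d) : ℕ :=
  sInf {m : ℕ | x.1 i ≤ (h i m : ℤ)}

/-- `ufun d h x = u(x) = max{x_{d+1}, p₁(x),…,p_d(x)}`. -/
noncomputable def ufun (d : ℕ) (h : Fin d → ℕ → ℕ) (x : Pt d) : ℕ :=
  max x.2.toNat (Finset.univ.sup (pfun d h x))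

/-- `Δ_{d+1}(n)`. -/
def DeltaTop (d : ℕ) (h : Fin d → ℕ → ℕ) : ℕ → Set (Pt d)
  | 0 => {0}
  | (n+1) => {x | x.2 = ((n : ℤ) + 1) ∧ ∀ i, 0 ≤ x.1 i ∧ x.1 i ≤ (h i (n+1) : ℤ)}

/-- `Δᵢ(n)` for `1 ≤ i ≤ d` (empty when `hᵢ(n) = hᵢ(n-1)`). -/
def DeltaSide (d : ℕ) (f : Fin d → ℕ → ℝ≥0∞) (h : Fin d → ℕ → ℕ) (i : Fin d) :
    ℕ → Set (Pt d)
  | 0 => {0}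
  | (n+1) => {x | h i (n+1) = h i n + 1 ∧ x ∈ V d f ∧
      (∀ j, x.1 j ≤ (h j (n+1) : ℤ)) ∧ x.1 i = (h i (n+1) : ℤ) ∧ x.2 ≤ (n : ℤ) + 1}

/-- `∂_n = ⋃_{i=1}^{d+1} Δᵢ(n)`. -/
def bdry (d : ℕ) (f : Fin d → ℕ → ℝ≥0∞) (h : Fin d → ℕ → ℕ) (n : ℕ) : Set (Pt d) :=
  DeltaTop d h n ∪ ⋃ i, DeltaSide d f h i n

/-- `x + eᵢ`, where `eᵢ` is the i-th standard unit vector of `ℤ^{d+1}`. -/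
def addE (d : ℕ) (x : Pt d) (i : Fin (d+1)) : Pt d :=
  if hi : (i : ℕ) < d then (Function.update x.1 ⟨i, hi⟩ (x.1 ⟨i, hi⟩ + 1), x.2)
  else (x.1, x.2 + 1)

/-- A flow on `Wedge(f₁,…,f_d)`: an antisymmetric function vanishing off edges. -/
def IsFlow (d : ℕ) (f : Fin d → ℕ → ℝ≥0∞) (θ : Pt d → Pt d → ℝ) : Prop :=
  (∀ v w, θ v w = - θ w v) ∧ ∀ v w, ¬ Edge d f v w → θ v w = 0

/-- Divergence of `θ` at `v`: `∑_w θ(v,w)`. -/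
noncomputable def divg (d : ℕ) (θ : Pt d → Pt d → ℝ) (v : Pt d) : ℝ := ∑' w, θ v w

/-- Energy of a flow: `(1/2) ∑_{v,w} θ(v,w)²`. -/
noncomputable def energy (d : ℕ) (θ : Pt d → Pt d → ℝ) : ℝ≥0∞ :=
  (1/2 : ℝ≥0∞) * ∑' q : Pt d × Pt d, ENNReal.ofReal (θ q.1 q.2 ^ 2)

/-- A unit flow from the vertex `a` to the set `B`. -/
def IsUnitFlow (d : ℕ) (f : Fin d → ℕ → ℝ≥0∞) (a : Pt d) (B : Set (Pt d))
    (θ : Pt d → Pt d → ℝ) : Prop :=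
  IsFlow d f θ ∧ divg d θ a = 1 ∧ ∀ v, v ∉ B ∪ {a} → divg d θ v = 0

/-- The set `V_x` built from the functions `g_{±i}` (here `gp i = g_i`, `gm i = g_{-i}`). -/
def Vx (d : ℕ) (gp gm : Fin d → ℕ → ℤ) (r s : ℕ) : Set (Pt d) :=
  {y | ∃ n : ℕ, n ≤ r - s ∧ y.2 = (n : ℤ) + (s : ℤ) ∧
    ∀ i, gm i n ≤ y.1 i ∧ y.1 i ≤ gp i n}

/-- `Lᵢ(n) = min{g_{εi}(n) : g_{εi}(n) = g_{εi}(n-1), ε ∈ {-1,1}}` (for `n ≥ 1`). -/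
def Lfun (d : ℕ) (gp gm : Fin d → ℕ → ℤ) (i : Fin d) (n : ℕ) : ℤ :=
  if gm i n = gm i (n-1) then gm i n else gp i n

/-- The map `Γ`. -/
def Gam (d : ℕ) (gp gm : Fin d → ℕ → ℤ) (s : ℕ) (y : Pt d) : Pt d :=
  if y.2 = (s : ℤ) then 0
  else (fun i => |y.1 i - Lfun d gp gm i (y.2 - (s : ℤ)).toNat|, y.2 - (s : ℤ))

/-- The set `H`, a piece of `Wedge(h₁,…,h_d)`. -/
def Hset (d : ℕ) (h : Fin d → ℕ → ℕ) (r s : ℕ) : Set (Pt d) :=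
  {y | ∃ n : ℕ, n ≤ r - s ∧ y.2 = (n : ℤ) ∧ ∀ i, 0 ≤ y.1 i ∧ y.1 i ≤ (h i n : ℤ)}

section Aux

variable {d : ℕ} {f : Fin d → ℕ → ℝ≥0∞} {h : Fin d → ℕ → ℕ}

/-- abbreviation for the recursion hypothesis -/
def HRec (d : ℕ) (f : Fin d → ℕ → ℝ≥0∞) (h : Fin d → ℕ → ℕ) : Prop :=
  ∀ (i : Fin d) (n : ℕ),
      ((h i n : ℝ≥0∞) + 1 ≤ f i (n + 1) ∧ h i (n + 1) = h i n + 1) ∨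
      (¬ ((h i n : ℝ≥0∞) + 1 ≤ f i (n + 1)) ∧ h i (n + 1) = h i n)

lemma hstep (hrec : HRec d f h) (i : Fin d) (n : ℕ) :
    h i (n+1) = h i n ∨ h i (n+1) = h i n + 1 := by
  rcases hrec i n with ⟨_, h'⟩ | ⟨_, h'⟩
  · exact Or.inr h'
  · exact Or.inl h'

lemma hmono (hrec : HRec d f h) (i : Fin d) : Monotone (h i) := by
  apply monotone_nat_of_le_succ
  intro n
  rcases hstep hrec i n with h' | h' <;> omega

/-- for `x ∈ V`, the set defining `pfun` is nonempty -/
lemma reach (hf : ∀ i, Monotone (f i)) (hrec : HRec d f h) {x : Pt d}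
    (hx : x ∈ V d f) (i : Fin d) : ∃ m, x.1 i ≤ (h i m : ℤ) := by
  obtain ⟨hx2, hxi⟩ := hx
  obtain ⟨hxi1, hxi2⟩ := hxi i
  set n := x.2.toNat with hn
  set c := (x.1 i).toNat with hc
  have hxc : x.1 i = (c : ℤ) := (Int.toNat_of_nonneg hxi1).symm
  have key : ∀ k, min c k ≤ h i (n + k) := by
    intro k
    induction k with
    | zero => simp
    | succ k ih =>
      by_cases hck : c ≤ h i (n + k)
      · have := hmono hrec i (Nat.le_succ (n + k))
        calc min c (k+1) ≤ c := min_le_left _ _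
          _ ≤ h i (n + k) := hck
          _ ≤ h i (n + k + 1) := this
      · have hlt : h i (n + k) + 1 ≤ c := by omega
        rcases hrec i (n + k) with ⟨_, heq⟩ | ⟨hfail, _⟩
        · have heq' : h i (n + (k + 1)) = h i (n + k) + 1 := heq
          omega
        · exfalso
          apply hfail
          calc (h i (n+k) : ℝ≥0∞) + 1 = ((h i (n+k) + 1 : ℕ) : ℝ≥0∞) := by push_cast; ring
            _ ≤ (c : ℝ≥0∞) := by exact_mod_cast Nat.cast_le.mpr hlt
            _ ≤ f i n := hxi2
            _ ≤ f i (n + k + 1) := hf i (by omega)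
  refine ⟨n + c, ?_⟩
  have hkc : c ≤ h i (n + c) := by simpa using key c
  rw [hxc]
  exact_mod_cast hkc

lemma pfun_spec (hf : ∀ i, Monotone (f i)) (hrec : HRec d f h) {x : Pt d}
    (hx : x ∈ V d f) (i : Fin d) : x.1 i ≤ (h i (pfun d h x i) : ℤ) :=
  Nat.sInf_mem (reach hf hrec hx i)

lemma pfun_le {x : Pt d} {i : Fin d} {m : ℕ} (hm : x.1 i ≤ (h i m : ℤ)) :
    pfun d h x i ≤ m :=
  Nat.sInf_le hm

lemma pfun_congr {x y : Pt d} {i : Fin d} (hxy : y.1 i = x.1 i) :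
    pfun d h y i = pfun d h x i := by
  unfold pfun; rw [hxy]

lemma pfun_mono (hf : ∀ i, Monotone (f i)) (hrec : HRec d f h) {x y : Pt d}
    (hy : y ∈ V d f) (i : Fin d) (hxy : x.1 i ≤ y.1 i) :
    pfun d h x i ≤ pfun d h y i :=
  pfun_le (le_trans hxy (pfun_spec hf hrec hy i))

lemma le_ufun_left {x : Pt d} : x.2.toNat ≤ ufun d h x := le_max_left _ _

lemma pfun_le_ufun {x : Pt d} (i : Fin d) : pfun d h x i ≤ ufun d h x :=
  le_trans (Finset.le_sup (Finset.mem_univ i)) (le_max_right _ _)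

/-- Horizontal edge case: `y = x + e_j`. -/
lemma horiz (hf : ∀ i, Monotone (f i)) (hrec : HRec d f h) {x y : Pt d}
    (hx : x ∈ V d f) (hy : y ∈ V d f) (h2 : x.2 = y.2) (j : Fin d)
    (hj : y.1 j = x.1 j + 1) (hoth : ∀ i, i ≠ j → y.1 i = x.1 i) :
    ufun d h y ≤ ufun d h x + 1 ∧ ufun d h x ≤ ufun d h y := by
  constructor
  · -- u(y) ≤ u(x) + 1
    set n := x.2.toNat with hn
    set c := (x.1 j).toNat with hc
    have hxc : x.1 j = (c : ℤ) := (Int.toNat_of_nonneg (hx.2 j).1).symm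
    set p := pfun d h x j with hp
    have hpc : (c : ℤ) ≤ (h j p : ℤ) := by rw [← hxc]; exact pfun_spec hf hrec hx j
    set m0 := max n p with hm0
    have hm0c : c ≤ h j m0 := by
      have h1 : h j p ≤ h j m0 := hmono hrec j (le_max_right n p)
      omega
    have hyj : y.1 j = (c : ℤ) + 1 := by rw [hj, hxc]
    have hpy : pfun d h y j ≤ m0 + 1 := by
      by_cases hcase : c + 1 ≤ h j m0
      · refine le_trans (pfun_le ?_) (Nat.le_succ m0)
        rw [hyj]; exact_mod_cast hcase
      · have heq : h j m0 = c := by omega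
        rcases hrec j m0 with ⟨_, hinc⟩ | ⟨hfail, _⟩
        · apply pfun_le
          rw [hyj, hinc, heq]; push_cast; omega
        · exfalso
          apply hfail
          have hyV := (hy.2 j).2
          have hyn : y.2.toNat = n := by rw [hn, h2]
          have hytoNat : (y.1 j).toNat = c + 1 := by omega
          rw [heq]
          calc (c : ℝ≥0∞) + 1 = ((c + 1 : ℕ) : ℝ≥0∞) := by push_cast; ring
            _ ≤ f j n := by rw [← hytoNat, ← hyn]; exact hyV
            _ ≤ f j (m0 + 1) := hf j (by omega)
    unfold ufun
    apply max_le
    · calc y.2.toNat = x.2.toNat := by rw [h2]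
        _ ≤ ufun d h x := le_ufun_left
        _ ≤ ufun d h x + 1 := Nat.le_succ _
    · apply Finset.sup_le
      intro i _
      by_cases hij : i = j
      · rw [hij]
        calc pfun d h y j ≤ m0 + 1 := hpy
          _ ≤ ufun d h x + 1 := by
            have h1 : n ≤ ufun d h x := le_ufun_left
            have h2' : p ≤ ufun d h x := pfun_le_ufun j
            omega
      · rw [pfun_congr (hoth i hij)]
        exact le_trans (pfun_le_ufun i) (Nat.le_succ _)
  · -- u(x) ≤ u(y)
    unfold ufun
    apply max_le
    · rw [h2]; exact le_max_left _ _
    · apply le_trans _ (le_max_right _ _)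
      apply Finset.sup_le
      intro i _
      refine le_trans (pfun_mono hf hrec hy i ?_) (Finset.le_sup (Finset.mem_univ i))
      by_cases hij : i = j
      · rw [hij]; omega
      · rw [hoth i hij]

/-- Vertical edge case. -/
lemma vert {x y : Pt d} (hx2 : 0 ≤ x.2) (hy2 : 0 ≤ y.2)
    (h1 : x.1 = y.1) (h2 : |x.2 - y.2| = 1) :
    |(ufun d h x : ℤ) - (ufun d h y : ℤ)| ≤ 1 := by
  have hps : pfun d h x = pfun d h y := by
    funext i; exact (pfun_congr (congrFun h1.symm i)).symm
  have habs : x.2 - y.2 = 1 ∨ x.2 - y.2 = -1 := by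
    rcases abs_eq (by norm_num : (0:ℤ) ≤ 1) |>.mp h2 with h' | h'
    · exact Or.inl h'
    · exact Or.inr h'
  have ht : x.2.toNat ≤ y.2.toNat + 1 ∧ y.2.toNat ≤ x.2.toNat + 1 := by
    rcases habs with h' | h' <;> omega
  unfold ufun
  rw [hps]
  set S := Finset.univ.sup (pfun d h y)
  have k1 : max x.2.toNat S ≤ max y.2.toNat S + 1 :=
    max_le (le_trans ht.1 (by omega : y.2.toNat + 1 ≤ max y.2.toNat S + 1))
      (le_trans (le_max_right _ _) (Nat.le_succ _))
  have k2 : max y.2.toNat S ≤ max x.2.toNat S + 1 :=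
    max_le (le_trans ht.2 (by omega : x.2.toNat + 1 ≤ max x.2.toNat S + 1))
      (le_trans (le_max_right _ _) (Nat.le_succ _))
  rw [abs_le]
  omega

/-- Decomposition of an ℓ¹-distance-1 pair. -/
lemma dist_cases {x y : Pt d} (hd1 : dist1 d x y = 1) :
    (x.1 = y.1 ∧ |x.2 - y.2| = 1) ∨
    (x.2 = y.2 ∧ ∃ j, |x.1 j - y.1 j| = 1 ∧ ∀ i, i ≠ j → x.1 i = y.1 i) := by
  unfold dist1 at hd1
  have hS : 0 ≤ ∑ i : Fin d, |x.1 i - y.1 i| :=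
    Finset.sum_nonneg fun i _ => abs_nonneg _
  have ht : 0 ≤ |x.2 - y.2| := abs_nonneg _
  by_cases hS0 : (∑ i : Fin d, |x.1 i - y.1 i|) = 0
  · left
    constructor
    · funext i
      have := (Finset.sum_eq_zero_iff_of_nonneg (fun i _ => abs_nonneg (x.1 i - y.1 i))).mp hS0 i (Finset.mem_univ i)
      have := abs_eq_zero.mp this
      omega
    · omega
  · right
    have hS1 : (∑ i : Fin d, |x.1 i - y.1 i|) = 1 := by omega
    have ht0 : x.2 = y.2 := by
      have : |x.2 - y.2| = 0 := by omega
      have := abs_eq_zero.mp this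
      omega
    refine ⟨ht0, ?_⟩
    have hex : ∃ j, |x.1 j - y.1 j| ≠ 0 := by
      by_contra hc
      push_neg at hc
      exact hS0 (Finset.sum_eq_zero fun i _ => hc i)
    obtain ⟨j, hj⟩ := hex
    have hj1 : 1 ≤ |x.1 j - y.1 j| := by
      have := abs_nonneg (x.1 j - y.1 j); omega
    have hle : |x.1 j - y.1 j| ≤ 1 := by
      calc |x.1 j - y.1 j| ≤ ∑ i : Fin d, |x.1 i - y.1 i| :=
        Finset.single_le_sum (f := fun i => |x.1 i - y.1 i|) (fun i _ => abs_nonneg _) (Finset.mem_univ j)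
        _ = 1 := hS1
    refine ⟨j, by omega, fun i hij => ?_⟩
    have hpair : |x.1 i - y.1 i| + |x.1 j - y.1 j| ≤ 1 := by
      calc |x.1 i - y.1 i| + |x.1 j - y.1 j|
          = ∑ k ∈ ({i, j} : Finset (Fin d)), |x.1 k - y.1 k| :=
            (Finset.sum_pair (f := fun k => |x.1 k - y.1 k|) hij).symm
        _ ≤ ∑ k : Fin d, |x.1 k - y.1 k| :=
            Finset.sum_le_sum_of_subset_of_nonneg (Finset.subset_univ _)
              (fun k _ _ => abs_nonneg _)
        _ = 1 := hS1
    have : |x.1 i - y.1 i| = 0 := by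
      have := abs_nonneg (x.1 i - y.1 i); omega
    have := abs_eq_zero.mp this
    omega

/-- Edge step: `|u(x) - u(y)| ≤ 1`. -/
lemma edge_step (hf : ∀ i, Monotone (f i)) (hrec : HRec d f h) {x y : Pt d}
    (he : Edge d f x y) :
    |(ufun d h x : ℤ) - (ufun d h y : ℤ)| ≤ 1 := by
  obtain ⟨hx, hy, hd1⟩ := he
  rcases dist_cases hd1 with ⟨h1, h2⟩ | ⟨h2, j, hj, hoth⟩
  · exact vert hx.1 hy.1 h1 h2
  · rcases (abs_eq (by norm_num : (0:ℤ) ≤ 1)).mp hj with h' | h'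
    · -- x.1 j = y.1 j + 1
      have := horiz hf hrec hy hx h2.symm j (by omega) hoth
      rw [abs_le]; omega
    · -- y.1 j = x.1 j + 1
      have := horiz hf hrec hx hy h2 j (by omega)
        (fun i hij => (hoth i hij).symm)
      rw [abs_le]; omega

lemma ufun_zero (h0 : ∀ i, h i 0 = 0) : ufun d h (0 : Pt d) = 0 := by
  unfold ufun
  have hp : ∀ i, pfun d h (0 : Pt d) i = 0 := by
    intro i
    apply Nat.le_zero.mp
    exact pfun_le (m := 0) (by simp)
  simp only [Prod.fst_zero, Prod.snd_zero, Int.toNat_zero]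
  rw [Nat.max_eq_zero_iff]
  refine ⟨rfl, ?_⟩
  apply Nat.le_zero.mp
  apply Finset.sup_le
  intro i _
  rw [hp i]

end Aux

/-- for every edge [x,y] ∈ E, |u(x) - u(y)| ≤ 1; consequently for every
n ≥ 1, ∂_n = {z ∈ V : u(z) = n} is a cutset: every path from the origin O to a vertex y
with u(y) > n contains a vertex z with u(z) = n. -/
theorem stmt_4
    (d : ℕ) (hd : 1 ≤ d) (f : Fin d → ℕ → ℝ≥0∞) (hf : ∀ i, Monotone (f i))
    (h : Fin d → ℕ → ℕ) (h0 : ∀ i, h i 0 = 0)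
    (hrec : ∀ (i : Fin d) (n : ℕ),
      ((h i n : ℝ≥0∞) + 1 ≤ f i (n + 1) ∧ h i (n + 1) = h i n + 1) ∨
      (¬ ((h i n : ℝ≥0∞) + 1 ≤ f i (n + 1)) ∧ h i (n + 1) = h i n)) :
    (∀ x y : Pt d, Edge d f x y → |(ufun d h x : ℤ) - (ufun d h y : ℤ)| ≤ 1) ∧
    (∀ n : ℕ, 1 ≤ n → ∀ (k : ℕ) (w : ℕ → Pt d),
      w 0 = (0 : Pt d) → (∀ j < k, Edge d f (w j) (w (j + 1))) →
      n < ufun d h (w k) → ∃ j ≤ k, ufun d h (w j) = n) := by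
  constructor
  · intro x y he
    exact edge_step hf hrec he
  · intro n hn k w hw0 hedges hk
    have main : ∀ k (w : ℕ → Pt d), ufun d h (w 0) ≤ n →
        (∀ j < k, Edge d f (w j) (w (j+1))) → n < ufun d h (w k) →
        ∃ j ≤ k, ufun d h (w j) = n := by
      intro k
      induction k with
      | zero => intro w h0' _ hlt; omega
      | succ k ih =>
        intro w h0' hed hlt
        by_cases hcase : ufun d h (w k) = n
        · exact ⟨k, Nat.le_succ k, hcase⟩
        by_cases hcase2 : n < ufun d h (w k)
        · obtain ⟨j, hj, hj2⟩ := ih w h0' (fun j hj => hed j (by omega)) hcase2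
          exact ⟨j, by omega, hj2⟩
        · exfalso
          have he := hed k (by omega)
          have hstep' := edge_step hf hrec he
          rw [abs_le] at hstep'
          omega
    apply main k w _ hedges hk
    rw [hw0, ufun_zero h0]
    omega

end WedgePaper
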